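/- Let θ be a CPWL function and let φ₀ and Φ be twice continuously differentiable around x̄ in the composite optimization setting with v̄ ∈ Λ_com(x̄). If the KKT solution map S_KKT is Lipschitz-like around ((0,0),(x̄,v̄)), then S_KKT is robustly isolatedly calm at ((0,0),(x̄,v̄)). -/

import Mathlib

open Filter Topology Set RealInnerProductSpace

noncomputable section

abbrev Ev (k : ℕ) := EuclideanSpace ℝ (Fin k)

/-- The Bouligand–Severi tangent cone to a set `s` at `x`. -/
def tcone {E : Type*} [NormedAddCommGroup E] [NormedSpace ℝ E] (s : Set E) (x : E) : Set E :=
  {w | ∃ (z : ℕ → E) (c : ℕ → ℝ), (∀ k, z k ∈ s) ∧ (∀ k, 0 ≤ c k) ∧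
      Tendsto z atTop (𝓝 x) ∧ Tendsto (fun k => c k • (z k - x)) atTop (𝓝 w)}

/-- The data of a convex piecewise linear (CPWL) extended-real-valued function on `ℝ^m`:
`θ(z) = max_i (⟨a i, z⟩ - al i)` on the polyhedron `dom θ = {z | ⟨d i, z⟩ ≤ be i ∀ i}`,
and `θ(z) = +∞` outside of it. -/
structure CPWL (m : ℕ) where
  l : ℕ
  p : ℕ
  hl : 0 < l
  a : Fin l → Ev m
  al : Fin l → ℝ
  d : Fin p → Ev m
  be : Fin p → ℝ
  dom_nonempty : ∃ z : Ev m, ∀ i, ⟪d i, z⟫ ≤ be i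

namespace CPWL

variable {m : ℕ} (θ : CPWL m)

/-- The (polyhedral) domain of the CPWL function. -/
def dom : Set (Ev m) := {z | ∀ i, ⟪θ.d i, z⟫ ≤ θ.be i}

/-- The real value `max_i (⟨a i, z⟩ - al i)` of the CPWL function (meaningful on its domain). -/
def val (z : Ev m) : ℝ := ⨆ i : Fin θ.l, (⟪θ.a i, z⟫ - θ.al i)

/-- The CPWL function as an extended-real-valued function. -/
def eval (z : Ev m) : EReal :=
  @ite _ (z ∈ θ.dom) (Classical.propDecidable _) ((θ.val z : ℝ) : EReal) ⊤

/-- The subdifferential (of convex analysis) of the CPWL function. -/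
def subdiff (z : Ev m) : Set (Ev m) :=
  {v | z ∈ θ.dom ∧ ∀ z' ∈ θ.dom, ⟪v, z' - z⟫ ≤ θ.val z' - θ.val z}

/-- Active indices `K(z)` of the max-representation. -/
def Kact (z : Ev m) : Set (Fin θ.l) := {i | θ.val z = ⟪θ.a i, z⟫ - θ.al i}

/-- Active indices `I(z)` of the domain constraints. -/
def Iact (z : Ev m) : Set (Fin θ.p) := {i | ⟪θ.d i, z⟫ = θ.be i}

/-- The critical cone `𝒦(z̄,v̄) = {w ∈ T(z̄; dom θ) : ⟨v̄,w⟩ = θ′(z̄;w)}`. -/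
def crit (zb vb : Ev m) : Set (Ev m) :=
  {w | w ∈ tcone θ.dom zb ∧
    Tendsto (fun t : ℝ => (θ.val (zb + t • w) - θ.val zb) / t) (𝓝[>] (0 : ℝ))
      (𝓝 ⟪vb, w⟫)}

/-- The graph of the subdifferential mapping. -/
def gph : Set (Ev m × Ev m) := {zv | zv.2 ∈ θ.subdiff zv.1}

/-- The graphical derivative `(D∂θ)(z̄,v̄)(u)`. -/
def Dsub (zb vb u : Ev m) : Set (Ev m) := {w | (u, w) ∈ tcone θ.gph (zb, vb)}

/-- The regular coderivative `(D̂*∂θ)(z̄,v̄)(u)`. -/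
def Dhat (zb vb u : Ev m) : Set (Ev m) :=
  {w | ∀ h ∈ tcone θ.gph (zb, vb), ⟪w, h.1⟫ - ⟪u, h.2⟫ ≤ 0}

end CPWL

section VarSys

variable {n m : ℕ}

/-- The adjoint `∇Φ(x)*` of the Jacobian of `Φ` at `x`. -/
def adjD (Φ : Ev n → Ev m) (x : Ev n) : Ev m →L[ℝ] Ev n :=
  ContinuousLinearMap.adjoint (fderiv ℝ Φ x)

/-- `Ψ(x,v) = f(x) + ∇Φ(x)* v`. -/
def Psi (f : Ev n → Ev n) (Φ : Ev n → Ev m) (x : Ev n) (v : Ev m) : Ev n :=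
  f x + adjD Φ x v

/-- The partial Jacobian `∇ₓΨ(x̄,v̄)`. -/
def gradxPsi (f : Ev n → Ev n) (Φ : Ev n → Ev m) (xb : Ev n) (vb : Ev m) :
    Ev n →L[ℝ] Ev n :=
  fderiv ℝ (fun x => Psi f Φ x vb) xb

/-- The Lagrange multiplier set `Λ(x̄)` of the variational system. -/
def Lam (f : Ev n → Ev n) (Φ : Ev n → Ev m) (θ : CPWL m) (xb : Ev n) : Set (Ev m) :=
  {v | Psi f Φ xb v = 0 ∧ v ∈ θ.subdiff (Φ xb)}

/-- `v̄` is a critical multiplier for the variational system. -/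
def IsCritical (f : Ev n → Ev n) (Φ : Ev n → Ev m) (θ : CPWL m) (xb : Ev n) (vb : Ev m) :
    Prop :=
  ∃ ξ : Ev n, ξ ≠ 0 ∧ ∃ w ∈ θ.Dsub (Φ xb) vb (fderiv ℝ Φ xb ξ),
    gradxPsi f Φ xb vb ξ + adjD Φ xb w = 0

/-- The solution map of the canonically perturbed variational system. -/
def Smap (f : Ev n → Ev n) (Φ : Ev n → Ev m) (θ : CPWL m) (p₁ : Ev n) (p₂ : Ev m) :
    Set (Ev n × Ev m) :=
  {xv | Psi f Φ xv.1 xv.2 = p₁ ∧ xv.2 ∈ θ.subdiff (Φ xv.1 + p₂)}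

end VarSys

section General

variable {n m : ℕ}

/-- The subdifferential of a general extended-real-valued function. -/
def subdiffE (θ : Ev m → EReal) (z : Ev m) : Set (Ev m) :=
  {v | ∀ z', ((⟪v, z' - z⟫ : ℝ) : EReal) ≤ θ z' - θ z}

/-- The graph of the subdifferential of a general extended-real-valued function. -/
def gphE (θ : Ev m → EReal) : Set (Ev m × Ev m) := {zv | zv.2 ∈ subdiffE θ zv.1}

/-- The graphical derivative of the subdifferential, general case. -/
def DsubE (θ : Ev m → EReal) (zb vb u : Ev m) : Set (Ev m) :=
  {w | (u, w) ∈ tcone (gphE θ) (zb, vb)}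

/-- The Lagrange multiplier set, general case. -/
def LamE (f : Ev n → Ev n) (Φ : Ev n → Ev m) (θ : Ev m → EReal) (xb : Ev n) :
    Set (Ev m) :=
  {v | Psi f Φ xb v = 0 ∧ v ∈ subdiffE θ (Φ xb)}

/-- The solution map of the canonically perturbed variational system, general case. -/
def SmapE (f : Ev n → Ev n) (Φ : Ev n → Ev m) (θ : Ev m → EReal) (p₁ : Ev n)
    (p₂ : Ev m) : Set (Ev n × Ev m) :=
  {xv | Psi f Φ xv.1 xv.2 = p₁ ∧ xv.2 ∈ subdiffE θ (Φ xv.1 + p₂)}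

end General

section Composite

variable {n m : ℕ}

/-- The gradient `∇ₓL(·,v)` of the Lagrangian `L(x,v) = φ₀(x) + ⟨Φ(x),v⟩`. -/
def gradL (φ₀ : Ev n → ℝ) (Φ : Ev n → Ev m) (v : Ev m) (x : Ev n) : Ev n :=
  gradient (fun y => φ₀ y + ⟪Φ y, v⟫) x

/-- The Hessian `∇²ₓₓL(x̄,v)` as a linear operator. -/
def HessOp (φ₀ : Ev n → ℝ) (Φ : Ev n → Ev m) (v : Ev m) (xb : Ev n) : Ev n →L[ℝ] Ev n :=
  fderiv ℝ (gradL φ₀ Φ v) xb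

/-- The Lagrange multiplier set `Λ_com(x̄)` of the composite optimization problem. -/
def LamCom (φ₀ : Ev n → ℝ) (Φ : Ev n → Ev m) (θ : CPWL m) (xb : Ev n) : Set (Ev m) :=
  {v | gradient φ₀ xb + adjD Φ xb v = 0 ∧ v ∈ θ.subdiff (Φ xb)}

/-- Criticality of a multiplier in the composite optimization setting. -/
def IsCriticalCom (φ₀ : Ev n → ℝ) (Φ : Ev n → Ev m) (θ : CPWL m) (xb : Ev n) (v : Ev m) :
    Prop :=
  ∃ ξ : Ev n, ξ ≠ 0 ∧ ∃ w ∈ θ.Dsub (Φ xb) v (fderiv ℝ Φ xb ξ),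
    HessOp φ₀ Φ v xb ξ + adjD Φ xb w = 0

/-- The solution map of the canonically perturbed KKT system of composite optimization. -/
def SKKT (φ₀ : Ev n → ℝ) (Φ : Ev n → Ev m) (θ : CPWL m) (p₁ : Ev n) (p₂ : Ev m) :
    Set (Ev n × Ev m) :=
  {xv | gradient φ₀ xv.1 + adjD Φ xv.1 xv.2 = p₁ ∧ xv.2 ∈ θ.subdiff (Φ xv.1 + p₂)}

/-- `x̄` is a local minimizer of `φ₀ + θ∘Φ`. -/
def LocalMin (φ₀ : Ev n → ℝ) (Φ : Ev n → Ev m) (θ : CPWL m) (xb : Ev n) : Prop :=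
  ∃ U ∈ 𝓝 xb, ∀ x ∈ U,
    ((φ₀ xb : ℝ) : EReal) + θ.eval (Φ xb) ≤ ((φ₀ x : ℝ) : EReal) + θ.eval (Φ x)

end Composite

section Calmness

variable {n m : ℕ}

/-- Isolated calmness of a solution map at `((0,0), q0)`. -/
def IsolCalm (S : Ev n × Ev m → Set (Ev n × Ev m)) (q0 : Ev n × Ev m) : Prop :=
  ∃ c : ℝ, 0 ≤ c ∧ ∃ U ∈ 𝓝 (0 : Ev n × Ev m), ∃ V ∈ 𝓝 q0,
    ∀ p ∈ U, ∀ q ∈ S p ∩ V, ‖q - q0‖ ≤ c * (‖p.1‖ + ‖p.2‖)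

/-- Robust isolated calmness of a solution map at `((0,0), q0)`. -/
def RobustIsolCalm (S : Ev n × Ev m → Set (Ev n × Ev m)) (q0 : Ev n × Ev m) : Prop :=
  ∃ c : ℝ, 0 ≤ c ∧ ∃ U ∈ 𝓝 (0 : Ev n × Ev m), ∃ V ∈ 𝓝 q0,
    (∀ p ∈ U, ∀ q ∈ S p ∩ V, ‖q - q0‖ ≤ c * (‖p.1‖ + ‖p.2‖)) ∧
    (∀ p ∈ U, (S p ∩ V).Nonempty)

/-- The Lipschitz-like (Aubin) property of a solution map around `((0,0), q0)`. -/
def LipschitzLike (S : Ev n × Ev m → Set (Ev n × Ev m)) (q0 : Ev n × Ev m) : Prop :=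
  ∃ c : ℝ, 0 ≤ c ∧ ∃ U ∈ 𝓝 (0 : Ev n × Ev m), ∃ V ∈ 𝓝 q0,
    ∀ p ∈ U, ∀ p' ∈ U, ∀ q ∈ S p ∩ V, ∃ q' ∈ S p', ‖q - q'‖ ≤ c * ‖p - p'‖

end Calmness


/-!
Near `z̄ = Φ(x̄)` a CPWL function is conical: `θ(z̄ + 2w) - θ(z̄) = 2 (θ(z̄ + w) - θ(z̄))`, and
`z̄ + w ∈ dom θ` forces `z̄ + 2w ∈ dom θ`. Hence a subgradient `v₁ ∈ ∂θ(z₁)` with `z₁` near `z̄`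
also lies in `∂θ(z̄)` and is exact along `[z̄, z₁]`, which combines with the subgradient
inequalities into a monotonicity-type estimate for any further point of `gph ∂θ`.

Let `(x₁, v₁) ≠ (x̄, v̄)` solve the unperturbed KKT system near `(x̄, v̄)`, with
`(ξ, u) = (x₁ - x̄, v₁ - v̄)` of norm `r`. The point `(x̄, v₁)` solves a system perturbed in `p₁`
only, and the Aubin property yields a solution `(x', v')` of the system perturbed further by
`μ (ξ, -u)`, within `cμr` of `(x̄, v₁)`. Pair this probe with `(ξ, u)`: the KKT map
`(x, v) ↦ (∇ₓL(x, v), Φ(x))` is the full gradient of `L`, so its strict derivative is symmetric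
for the pairing, and the monotonicity estimate controls the remaining term. With `ε` the
linearization error and `K` a local Lipschitz constant of the KKT map, the outcome is
`μ r² ≤ (4εc + 2cμ(Kc + 1)) μ r²`, impossible once `ε` and `μ` are small. Thus `(x̄, v̄)` is
isolated in `S_KKT(0, 0)`, and the Aubin property turns isolation into robust isolated calmness.
-/

open scoped NNReal

namespace CPWL

variable {m : ℕ} (θ : CPWL m)

lemma le_val (z : Ev m) (i : Fin θ.l) : ⟪θ.a i, z⟫ - θ.al i ≤ θ.val z :=
  le_ciSup (f := fun j => ⟪θ.a j, z⟫ - θ.al j) (Set.finite_range _).bddAbove i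

lemma exists_val_eq (z : Ev m) : ∃ i, θ.val z = ⟪θ.a i, z⟫ - θ.al i := by
  have : Nonempty (Fin θ.l) := Fin.pos_iff_nonempty.mp θ.hl
  obtain ⟨i, hi⟩ := Finite.exists_max fun i : Fin θ.l => ⟪θ.a i, z⟫ - θ.al i
  exact ⟨i, le_antisymm (ciSup_le hi) (θ.le_val z i)⟩

lemma val_add_le_of_mem_Kact {zb : Ev m} {i : Fin θ.l} (hi : i ∈ θ.Kact zb) (w : Ev m) :
    θ.val zb + ⟪θ.a i, w⟫ ≤ θ.val (zb + w) := by
  have hi' : θ.val zb = ⟪θ.a i, zb⟫ - θ.al i := hi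
  have := θ.le_val (zb + w) i
  rw [inner_add_right] at this
  linarith

lemma eventually_exists_mem_Kact_val_add (zb : Ev m) :
    ∀ᶠ w in 𝓝 0, ∃ i ∈ θ.Kact zb, θ.val (zb + w) = θ.val zb + ⟪θ.a i, w⟫ := by
  obtain ⟨i₀, hi₀⟩ := θ.exists_val_eq zb
  have hinactive : ∀ i, ∀ᶠ w in 𝓝 (0 : Ev m), i ∈ θ.Kact zb ∨
      ⟪θ.a i, zb + w⟫ - θ.al i < ⟪θ.a i₀, zb + w⟫ - θ.al i₀ := by
    intro i
    by_cases hi : i ∈ θ.Kact zb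
    · exact Eventually.of_forall fun _ => Or.inl hi
    · have hlt : ⟪θ.a i, zb + 0⟫ - θ.al i < ⟪θ.a i₀, zb + 0⟫ - θ.al i₀ := by
        rw [add_zero, ← hi₀]
        exact lt_of_le_of_ne (θ.le_val zb i) (Ne.symm hi)
      have hcont : Continuous fun w : Ev m =>
          (⟪θ.a i₀, zb + w⟫ - θ.al i₀) - (⟪θ.a i, zb + w⟫ - θ.al i) := by fun_prop
      filter_upwards [continuousAt_const.eventually_lt hcont.continuousAt (sub_pos.2 hlt)]
        with w hw
      exact Or.inr (sub_pos.1 hw)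
  filter_upwards [eventually_all.2 hinactive] with w hw
  obtain ⟨j, hj⟩ := θ.exists_val_eq (zb + w)
  have hjK : j ∈ θ.Kact zb := (hw j).resolve_right fun h => by
    linarith [θ.le_val (zb + w) i₀]
  have hj₀ : θ.val zb = ⟪θ.a j, zb⟫ - θ.al j := hjK
  refine ⟨j, hjK, ?_⟩
  rw [hj, inner_add_right, hj₀]
  ring

lemma eventually_val_add_two_smul (zb : Ev m) :
    ∀ᶠ w in 𝓝 0, θ.val (zb + (2 : ℝ) • w) + θ.val zb = 2 * θ.val (zb + w) := by
  have h := θ.eventually_exists_mem_Kact_val_add zb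
  have h₂ : Tendsto (fun w : Ev m => (2 : ℝ) • w) (𝓝 0) (𝓝 0) := by
    simpa using (tendsto_id (x := 𝓝 (0 : Ev m))).const_smul (2 : ℝ)
  filter_upwards [h, h₂.eventually h] with w ⟨i, hi, hw⟩ ⟨j, hj, h2w⟩
  have hij := θ.val_add_le_of_mem_Kact hj w
  have hji := θ.val_add_le_of_mem_Kact hi ((2 : ℝ) • w)
  rw [real_inner_smul_right] at hji h2w
  linarith

lemma eventually_add_two_smul_mem_dom {zb : Ev m} (hzb : zb ∈ θ.dom) :
    ∀ᶠ d in 𝓝 0, zb + d ∈ θ.dom → zb + (2 : ℝ) • d ∈ θ.dom := by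
  have hconstraint : ∀ i, ∀ᶠ d in 𝓝 (0 : Ev m),
      ⟪θ.d i, zb + d⟫ ≤ θ.be i → ⟪θ.d i, zb + (2 : ℝ) • d⟫ ≤ θ.be i := by
    intro i
    rcases (hzb i).lt_or_eq with hlt | heq
    · have hcont : Continuous fun d : Ev m => ⟪θ.d i, zb + (2 : ℝ) • d⟫ := by fun_prop
      have h0 : ⟪θ.d i, zb + (2 : ℝ) • (0 : Ev m)⟫ < θ.be i := by simpa using hlt
      filter_upwards [hcont.continuousAt.eventually_lt continuousAt_const h0] with d hd _
      exact hd.le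
    · refine Eventually.of_forall fun d hd => ?_
      rw [inner_add_right] at hd ⊢
      rw [real_inner_smul_right]
      linarith
  filter_upwards [eventually_all.2 hconstraint] with d hd hmem i using hd i (hmem i)

lemma eventually_subdiff_subset {zb : Ev m} (hzb : zb ∈ θ.dom) :
    ∀ᶠ z in 𝓝 zb, ∀ v ∈ θ.subdiff z,
      v ∈ θ.subdiff zb ∧ ⟪v, z - zb⟫ = θ.val z - θ.val zb := by
  have hsub : Tendsto (fun z => z - zb) (𝓝 zb) (𝓝 0) := by
    simpa using (tendsto_id (x := 𝓝 zb)).sub_const zb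
  filter_upwards [hsub.eventually (θ.eventually_val_add_two_smul zb),
    hsub.eventually (θ.eventually_add_two_smul_mem_dom hzb)] with z hval hdom v hv
  rw [add_sub_cancel] at hval hdom
  have hfar := hv.2 _ (hdom hv.1)
  have hnear := hv.2 zb hzb
  rw [show zb + (2 : ℝ) • (z - zb) - z = z - zb by module] at hfar
  rw [show zb - z = -(z - zb) by abel, inner_neg_right] at hnear
  have hexact : ⟪v, z - zb⟫ = θ.val z - θ.val zb := by linarith
  refine ⟨⟨hzb, fun z' hz' => ?_⟩, hexact⟩
  have := hv.2 z' hz'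
  rw [show z' - zb = (z' - z) + (z - zb) by abel, inner_add_right]
  linarith

lemma inner_sub_sub_inner_sub_le {zb z₁ z v₀ v₁ v : Ev m} (hv₀ : v₀ ∈ θ.subdiff zb)
    (hz₁ : z₁ ∈ θ.dom) (hv₁ : v₁ ∈ θ.subdiff zb) (hexact : ⟪v₁, z₁ - zb⟫ = θ.val z₁ - θ.val zb)
    (hv : v ∈ θ.subdiff z) :
    ⟪v - v₁, z₁ - zb⟫ - ⟪v₁ - v₀, z - zb⟫ ≤ 2 * ⟪v - v₁, z - zb⟫ := by
  have h₁ := hv.2 z₁ hz₁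
  have h₂ := hv.2 zb hv₀.1
  have h₃ := hv₁.2 z hv.1
  have h₄ := hv₀.2 z hv.1
  rw [show z₁ - z = (z₁ - zb) - (z - zb) by abel, inner_sub_right] at h₁
  rw [show zb - z = -(z - zb) by abel, inner_neg_right] at h₂
  simp only [inner_sub_left]
  linarith

end CPWL

section Gradient

variable {F : Type*} [NormedAddCommGroup F] [InnerProductSpace ℝ F] [CompleteSpace F]
  {f : F → ℝ} {x : F}

lemma ContDiffAt.gradient {k : WithTop ℕ∞} (hf : ContDiffAt ℝ (k + 1) f x) :
    ContDiffAt ℝ k (gradient f) x :=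
  (InnerProductSpace.toDual ℝ F).symm.contDiff.comp_contDiffAt x (hf.fderiv_right le_rfl)

lemma inner_fderiv_gradient_comm (hf : ContDiffAt ℝ 2 f x) (h k : F) :
    ⟪fderiv ℝ (gradient f) x h, k⟫ = ⟪fderiv ℝ (gradient f) x k, h⟫ := by
  have hD : HasFDerivAt (fderiv ℝ f) (fderiv ℝ (fderiv ℝ f) x) x :=
    ((hf.fderiv_right (m := 1) le_rfl).differentiableAt one_ne_zero).hasFDerivAt
  have hgrad : HasFDerivAt (gradient f)
      ((InnerProductSpace.toDual ℝ F).symm.toContinuousLinearEquiv.toContinuousLinearMap.comp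
        (fderiv ℝ (fderiv ℝ f) x)) x :=
    (InnerProductSpace.toDual ℝ F).symm.toContinuousLinearEquiv.toContinuousLinearMap
      |>.hasFDerivAt.comp x hD
  simp only [hgrad.fderiv, ContinuousLinearMap.coe_comp, Function.comp_apply,
    ContinuousLinearEquiv.coe_coe, LinearIsometryEquiv.coe_toContinuousLinearEquiv,
    InnerProductSpace.toDual_symm_apply]
  exact hf.isSymmSndFDerivAt (by simp) h k

end Gradient

section Adjoint

variable {E F : Type*} [NormedAddCommGroup E] [InnerProductSpace ℝ E] [CompleteSpace E]
  [NormedAddCommGroup F] [InnerProductSpace ℝ F] [CompleteSpace F]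

lemma isBoundedLinearMap_adjoint :
    IsBoundedLinearMap ℝ fun T : E →L[ℝ] F => ContinuousLinearMap.adjoint T :=
  { map_add := map_add _
    map_smul := fun c T => by simp
    bound := ⟨1, one_pos, fun T => by simp⟩ }

end Adjoint

section Pairing

variable {X Y : Type*} [NormedAddCommGroup X] [InnerProductSpace ℝ X]
  [NormedAddCommGroup Y] [InnerProductSpace ℝ Y]

/-- The product norm on `X × Y` is the sup norm, so `X × Y` carries no inner product; this is
the natural pairing of `X × Y` with itself. -/
def pairing (q q' : X × Y) : ℝ := ⟪q.1, q'.1⟫ + ⟪q.2, q'.2⟫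

lemma pairing_add_right (q q' q'' : X × Y) :
    pairing q (q' + q'') = pairing q q' + pairing q q'' := by
  simp only [pairing, Prod.fst_add, Prod.snd_add, inner_add_right]
  ring

lemma pairing_add_left (q q' q'' : X × Y) :
    pairing (q + q') q'' = pairing q q'' + pairing q' q'' := by
  simp only [pairing, Prod.fst_add, Prod.snd_add, inner_add_left]
  ring

lemma abs_pairing_le (q q' : X × Y) : |pairing q q'| ≤ 2 * (‖q‖ * ‖q'‖) := by
  have h₁ := abs_real_inner_le_norm q.1 q'.1
  have h₂ := abs_real_inner_le_norm q.2 q'.2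
  have h₁' : ‖q.1‖ * ‖q'.1‖ ≤ ‖q‖ * ‖q'‖ :=
    mul_le_mul (norm_fst_le q) (norm_fst_le q') (norm_nonneg _) (norm_nonneg _)
  have h₂' : ‖q.2‖ * ‖q'.2‖ ≤ ‖q‖ * ‖q'‖ :=
    mul_le_mul (norm_snd_le q) (norm_snd_le q') (norm_nonneg _) (norm_nonneg _)
  calc |pairing q q'| ≤ |⟪q.1, q'.1⟫| + |⟪q.2, q'.2⟫| := abs_add_le _ _
    _ ≤ 2 * (‖q‖ * ‖q'‖) := by linarith

lemma ApproximatesLinearOn.abs_pairing_sub_pairing_le {G : X × Y → X × Y}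
    {A : X × Y →L[ℝ] X × Y} {s : Set (X × Y)} {ε : ℝ≥0} (hG : ApproximatesLinearOn G A s ε)
    (hA : ∀ h k, pairing h (A k) = pairing (A h) k) {p₁ p₂ p₃ p₄ : X × Y}
    (h₁ : p₁ ∈ s) (h₂ : p₂ ∈ s) (h₃ : p₃ ∈ s) (h₄ : p₄ ∈ s) :
    |pairing (p₁ - p₂) (G p₃ - G p₄) - pairing (G p₁ - G p₂) (p₃ - p₄)|
      ≤ 4 * ε * (‖p₁ - p₂‖ * ‖p₃ - p₄‖) := by
  set R₁₂ := G p₁ - G p₂ - A (p₁ - p₂) with hR₁₂def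
  set R₃₄ := G p₃ - G p₄ - A (p₃ - p₄) with hR₃₄def
  have hR₁₂ : ‖R₁₂‖ ≤ ε * ‖p₁ - p₂‖ := hG p₁ h₁ p₂ h₂
  have hR₃₄ : ‖R₃₄‖ ≤ ε * ‖p₃ - p₄‖ := hG p₃ h₃ p₄ h₄
  have hsplit : pairing (p₁ - p₂) (G p₃ - G p₄) - pairing (G p₁ - G p₂) (p₃ - p₄)
      = pairing (p₁ - p₂) R₃₄ - pairing R₁₂ (p₃ - p₄) := by
    rw [show G p₃ - G p₄ = A (p₃ - p₄) + R₃₄ by rw [hR₃₄def]; abel,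
      show G p₁ - G p₂ = A (p₁ - p₂) + R₁₂ by rw [hR₁₂def]; abel,
      pairing_add_right, pairing_add_left, hA]
    ring
  have hb₁ := abs_pairing_le (p₁ - p₂) R₃₄
  have hb₂ := abs_pairing_le R₁₂ (p₃ - p₄)
  have hb₁' : ‖p₁ - p₂‖ * ‖R₃₄‖ ≤ ε * (‖p₁ - p₂‖ * ‖p₃ - p₄‖) := by
    nlinarith [norm_nonneg (p₁ - p₂)]
  have hb₂' : ‖R₁₂‖ * ‖p₃ - p₄‖ ≤ ε * (‖p₁ - p₂‖ * ‖p₃ - p₄‖) := by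
    nlinarith [norm_nonneg (p₃ - p₄)]
  rw [hsplit]
  calc _ ≤ |pairing (p₁ - p₂) R₃₄| + |pairing R₁₂ (p₃ - p₄)| := abs_sub _ _
    _ ≤ 4 * ε * (‖p₁ - p₂‖ * ‖p₃ - p₄‖) := by linarith

end Pairing

section KKT

variable {n m : ℕ}

lemma ContDiffAt.adjD {Φ : Ev n → Ev m} {x : Ev n} {k : WithTop ℕ∞}
    (hΦ : ContDiffAt ℝ (k + 1) Φ x) : ContDiffAt ℝ k (adjD Φ) x :=
  isBoundedLinearMap_adjoint.contDiff.comp_contDiffAt x (hΦ.fderiv_right le_rfl)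

lemma hasGradientAt_inner_left {Φ : Ev n → Ev m} {y : Ev n} (hΦ : DifferentiableAt ℝ Φ y)
    (v : Ev m) : HasGradientAt (fun z => ⟪Φ z, v⟫) (adjD Φ y v) y := by
  have hcomp : HasFDerivAt (fun z => ⟪v, Φ z⟫) ((innerSL ℝ v).comp (fderiv ℝ Φ y)) y :=
    (innerSL ℝ v).hasFDerivAt.comp y hΦ.hasFDerivAt
  rw [show (fun z => ⟪v, Φ z⟫) = fun z => ⟪Φ z, v⟫ from funext fun z => real_inner_comm _ _]
    at hcomp
  refine hasGradientAt_iff_hasFDerivAt.2 (hcomp.congr_fderiv (ContinuousLinearMap.ext fun w => ?_))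
  simp [adjD, ContinuousLinearMap.adjoint_inner_left]

lemma gradL_eq {φ₀ : Ev n → ℝ} {Φ : Ev n → Ev m} {y : Ev n} (hφ : DifferentiableAt ℝ φ₀ y)
    (hΦ : DifferentiableAt ℝ Φ y) (v : Ev m) :
    gradL φ₀ Φ v y = gradient φ₀ y + adjD Φ y v := by
  have h := hφ.hasGradientAt.hasFDerivAt.add (hasGradientAt_inner_left hΦ v).hasFDerivAt
  rw [← map_add] at h
  exact (hasGradientAt_iff_hasFDerivAt.2 h).gradient

variable (φ₀ : Ev n → ℝ) (Φ : Ev n → Ev m)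

/-- The gradient of the Lagrangian `L(x,v) = φ₀(x) + ⟨Φ(x),v⟩` in both variables. -/
def kktMap (q : Ev n × Ev m) : Ev n × Ev m := (gradient φ₀ q.1 + adjD Φ q.1 q.2, Φ q.1)

def kktJac (xb : Ev n) (vb : Ev m) : Ev n × Ev m →L[ℝ] Ev n × Ev m :=
  ((HessOp φ₀ Φ vb xb).coprod (adjD Φ xb)).prod
    ((fderiv ℝ Φ xb).comp (ContinuousLinearMap.fst ℝ (Ev n) (Ev m)))

/-- The perturbation `(p₁, p₂)` at which `(xb, v)` satisfies the first KKT equation, shifted by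
`μ (x - xb, -(v - vb))`. -/
def kktProbe (xb : Ev n) (vb : Ev m) (μ : ℝ) (q : Ev n × Ev m) : Ev n × Ev m :=
  ((kktMap φ₀ Φ (xb, q.2)).1 + μ • (q.1 - xb), -(μ • (q.2 - vb)))

variable {φ₀ Φ} {xb : Ev n} {vb : Ev m}

lemma tendsto_kktProbe (hG : ContinuousAt (kktMap φ₀ Φ) (xb, vb))
    (h0 : (kktMap φ₀ Φ (xb, vb)).1 = 0) (μ : ℝ) :
    Tendsto (kktProbe φ₀ Φ xb vb μ) (𝓝 (xb, vb)) (𝓝 0) := by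
  have hcorner : Tendsto (fun q : Ev n × Ev m => ((xb, q.2) : Ev n × Ev m)) (𝓝 (xb, vb))
      (𝓝 (xb, vb)) :=
    (continuous_const.prodMk continuous_snd).tendsto (xb, vb)
  have hg : Tendsto (fun q : Ev n × Ev m => (kktMap φ₀ Φ (xb, q.2)).1) (𝓝 (xb, vb)) (𝓝 0) := by
    rw [← h0]
    exact (continuous_fst.tendsto _).comp (hG.tendsto.comp hcorner)
  have h₁ : Tendsto (fun q : Ev n × Ev m => μ • (q.1 - xb)) (𝓝 (xb, vb)) (𝓝 0) := by
    simpa using ((continuous_fst.tendsto (xb, vb)).sub_const xb).const_smul μ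
  have h₂ : Tendsto (fun q : Ev n × Ev m => -(μ • (q.2 - vb))) (𝓝 (xb, vb)) (𝓝 0) := by
    simpa using (((continuous_snd.tendsto (xb, vb)).sub_const vb).const_smul μ).neg
  rw [← Prod.mk_zero_zero, ← add_zero (0 : Ev n)]
  exact (hg.add h₁).prodMk_nhds h₂

lemma norm_kktProbe_zero_sub {μ : ℝ} (hμ : 0 ≤ μ) (q : Ev n × Ev m) :
    ‖kktProbe φ₀ Φ xb vb 0 q - kktProbe φ₀ Φ xb vb μ q‖ = μ * ‖q - (xb, vb)‖ := by
  simp [kktProbe, Prod.norm_def, norm_smul, Real.norm_of_nonneg hμ, mul_max_of_nonneg _ _ hμ]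

lemma contDiffAt_lagrangian (hphi : ContDiffAt ℝ 2 φ₀ xb) (hPhi : ContDiffAt ℝ 2 Φ xb) :
    ContDiffAt ℝ 2 (fun y => φ₀ y + ⟪Φ y, vb⟫) xb :=
  hphi.add (hPhi.inner ℝ contDiffAt_const)

lemma pairing_kktJac_comm (hphi : ContDiffAt ℝ 2 φ₀ xb) (hPhi : ContDiffAt ℝ 2 Φ xb)
    (h k : Ev n × Ev m) :
    pairing h (kktJac φ₀ Φ xb vb k) = pairing (kktJac φ₀ Φ xb vb h) k := by
  have hH : ⟪h.1, HessOp φ₀ Φ vb xb k.1⟫ = ⟪HessOp φ₀ Φ vb xb h.1, k.1⟫ := by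
    rw [real_inner_comm]
    exact inner_fderiv_gradient_comm (contDiffAt_lagrangian hphi hPhi) k.1 h.1
  simp only [pairing, kktJac, ContinuousLinearMap.prod_apply,
    ContinuousLinearMap.coprod_apply, ContinuousLinearMap.comp_apply,
    ContinuousLinearMap.coe_fst', inner_add_left, inner_add_right, adjD,
    ContinuousLinearMap.adjoint_inner_left, ContinuousLinearMap.adjoint_inner_right]
  rw [hH]
  ring

lemma hasStrictFDerivAt_kktMap (hphi : ContDiffAt ℝ 2 φ₀ xb) (hPhi : ContDiffAt ℝ 2 Φ xb) :
    HasStrictFDerivAt (kktMap φ₀ Φ) (kktJac φ₀ Φ xb vb) (xb, vb) := by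
  have hL : ContDiffAt ℝ 2 (fun y => φ₀ y + ⟪Φ y, vb⟫) xb := contDiffAt_lagrangian hphi hPhi
  set F : Ev n × Ev m → Ev n × Ev m :=
    fun q => (gradL φ₀ Φ vb q.1 + adjD Φ q.1 (q.2 - vb), Φ q.1) with hF
  have hkkt : F =ᶠ[𝓝 (xb, vb)] kktMap φ₀ Φ := by
    have hdiff : ∀ᶠ y in 𝓝 xb, DifferentiableAt ℝ φ₀ y ∧ DifferentiableAt ℝ Φ y := by
      filter_upwards [hphi.eventually (by simp), hPhi.eventually (by simp)] with y hφ hΦ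
      exact ⟨hφ.differentiableAt (by simp), hΦ.differentiableAt (by simp)⟩
    filter_upwards [(continuous_fst.tendsto (xb, vb)).eventually hdiff] with q hq
    simp only [hF, kktMap, gradL_eq hq.1 hq.2, map_sub]
    abel_nf
  have hF1 : ContDiffAt ℝ 1 F (xb, vb) := by
    refine ContDiffAt.prodMk ?_ ((hPhi.of_le one_le_two).comp _ contDiffAt_fst)
    have hadj : ContDiffAt ℝ 1 (adjD Φ) xb := ContDiffAt.adjD (k := 1) hPhi
    replace hadj : ContDiffAt ℝ 1 (fun q : Ev n × Ev m => adjD Φ q.1) (xb, vb) :=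
      ContDiffAt.comp (g := adjD Φ) (f := Prod.fst) (xb, vb) hadj contDiffAt_fst
    exact ((hL.gradient (k := 1)).comp _ contDiffAt_fst).add
      (hadj.clm_apply (contDiffAt_snd.sub contDiffAt_const))
  have hF' : HasFDerivAt F (kktJac φ₀ Φ xb vb) (xb, vb) := by
    have hgrad : HasFDerivAt (gradL φ₀ Φ vb) (HessOp φ₀ Φ vb xb) xb :=
      ((hL.gradient (k := 1)).differentiableAt one_ne_zero).hasFDerivAt
    have hadj : HasFDerivAt (adjD Φ) (fderiv ℝ (adjD Φ) xb) xb :=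
      ((ContDiffAt.adjD (k := 1) hPhi).differentiableAt one_ne_zero).hasFDerivAt
    have h₁ := (hgrad.comp (xb, vb) hasFDerivAt_fst).add
      ((HasFDerivAt.comp (g := adjD Φ) (xb, vb) hadj hasFDerivAt_fst).clm_apply
        (hasFDerivAt_snd.sub_const vb))
    have hΦ : HasFDerivAt Φ (fderiv ℝ Φ xb) xb := (hPhi.differentiableAt two_ne_zero).hasFDerivAt
    have h₂ : HasFDerivAt (fun q : Ev n × Ev m => Φ q.1)
        ((fderiv ℝ Φ xb).comp (ContinuousLinearMap.fst ℝ _ _)) (xb, vb) :=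
      hΦ.comp (xb, vb) hasFDerivAt_fst
    refine (h₁.prodMk h₂).congr_fderiv ?_
    ext q <;> simp [kktJac]
  exact (hF1.hasStrictFDerivAt' hF' one_ne_zero).congr_of_eventuallyEq hkkt

end KKT

section Isolated

variable {n m : ℕ} {θ : CPWL m} {φ₀ : Ev n → ℝ} {Φ : Ev n → Ev m} {xb : Ev n} {vb : Ev m}

lemma mul_norm_sq_add_le_of_mem_SKKT {x₁ x' : Ev n} {v₁ v' : Ev m} {μ : ℝ}
    (hvb : vb ∈ LamCom φ₀ Φ θ xb) (hq₁ : (x₁, v₁) ∈ SKKT φ₀ Φ θ 0 0)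
    (hv₁ : v₁ ∈ θ.subdiff (Φ xb)) (hexact : ⟪v₁, Φ x₁ - Φ xb⟫ = θ.val (Φ x₁) - θ.val (Φ xb))
    (hq' : (x', v') ∈ SKKT φ₀ Φ θ (kktProbe φ₀ Φ xb vb μ (x₁, v₁)).1
      (kktProbe φ₀ Φ xb vb μ (x₁, v₁)).2) :
    μ * (‖x₁ - xb‖ ^ 2 + ‖v₁ - vb‖ ^ 2)
      ≤ pairing ((x₁, v₁) - (xb, vb)) (kktMap φ₀ Φ (x', v') - kktMap φ₀ Φ (xb, v₁))
        - pairing (kktMap φ₀ Φ (x₁, v₁) - kktMap φ₀ Φ (xb, vb)) ((x', v') - (xb, v₁))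
        + 2 * ⟪v' - v₁, Φ x' - μ • (v₁ - vb) - Φ xb⟫ := by
  have hswap := θ.inner_sub_sub_inner_sub_le hvb.2 (by simpa using hq₁.2.1) hv₁ hexact hq'.2
  have hg₁ : (kktMap φ₀ Φ (x₁, v₁)).1 = 0 := hq₁.1
  have hg₀ : (kktMap φ₀ Φ (xb, vb)).1 = 0 := hvb.1
  have hg' : (kktMap φ₀ Φ (x', v')).1 = (kktMap φ₀ Φ (xb, v₁)).1 + μ • (x₁ - xb) := hq'.1
  have hprobe : kktMap φ₀ Φ (x', v') - kktMap φ₀ Φ (xb, v₁) = (μ • (x₁ - xb), Φ x' - Φ xb) :=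
    Prod.ext (by rw [Prod.fst_sub, hg', add_sub_cancel_left]) rfl
  have hbase : kktMap φ₀ Φ (x₁, v₁) - kktMap φ₀ Φ (xb, vb) = (0, Φ x₁ - Φ xb) :=
    Prod.ext (by rw [Prod.fst_sub, hg₁, hg₀, sub_zero]) rfl
  dsimp only [kktProbe] at hswap
  rw [← sub_eq_add_neg, sub_right_comm, inner_sub_right (v₁ - vb), real_inner_smul_right,
    real_inner_self_eq_norm_sq] at hswap
  rw [hprobe, hbase]
  simp only [pairing, Prod.fst_sub, Prod.snd_sub, inner_zero_left, real_inner_smul_right,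
    real_inner_self_eq_norm_sq, sub_right_comm (Φ x') (μ • (v₁ - vb))]
  linarith [real_inner_comm (v' - v₁) (Φ x₁ - Φ xb)]

lemma inner_sub_le_of_lipschitzOnWith {s : Set (Ev n × Ev m)} {K : ℝ≥0} {μ d r : ℝ}
    {x' : Ev n} {v₁ v' u : Ev m} (hK : LipschitzOnWith K (kktMap φ₀ Φ) s) (hs' : (x', v') ∈ s)
    (hsc : (xb, v₁) ∈ s) (hd : ‖(x', v') - (xb, v₁)‖ ≤ d) (hμ : 0 ≤ μ) (hu : ‖u‖ ≤ r) :
    ⟪v' - v₁, Φ x' - μ • u - Φ xb⟫ ≤ d * (K * d + μ * r) := by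
  have hv' : ‖v' - v₁‖ ≤ d := (norm_snd_le _).trans hd
  have hΦ' : ‖Φ x' - Φ xb‖ ≤ K * d :=
    (norm_snd_le _).trans ((hK.norm_sub_le hs' hsc).trans (by gcongr))
  have hz : ‖Φ x' - μ • u - Φ xb‖ ≤ K * d + μ * r := by
    rw [sub_right_comm]
    refine (norm_sub_le _ _).trans (add_le_add hΦ' ?_)
    rw [norm_smul, Real.norm_of_nonneg hμ]
    exact mul_le_mul_of_nonneg_left hu hμ
  exact (real_inner_le_norm _ _).trans
    (mul_le_mul hv' hz (norm_nonneg _) ((norm_nonneg _).trans hv'))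

lemma mul_norm_sq_le_mul_of_mem_SKKT {s : Set (Ev n × Ev m)} {ε K : ℝ≥0} {c μ : ℝ} {x₁ x' : Ev n}
    {v₁ v' : Ev m} (hc : 0 ≤ c) (hμ : 0 ≤ μ)
    (happrox : ApproximatesLinearOn (kktMap φ₀ Φ) (kktJac φ₀ Φ xb vb) s ε)
    (hsymm : ∀ h k, pairing h (kktJac φ₀ Φ xb vb k) = pairing (kktJac φ₀ Φ xb vb h) k)
    (hK : LipschitzOnWith K (kktMap φ₀ Φ) s) (hvb : vb ∈ LamCom φ₀ Φ θ xb)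
    (hq₁ : (x₁, v₁) ∈ SKKT φ₀ Φ θ 0 0) (hv₁ : v₁ ∈ θ.subdiff (Φ xb))
    (hexact : ⟪v₁, Φ x₁ - Φ xb⟫ = θ.val (Φ x₁) - θ.val (Φ xb))
    (hq' : (x', v') ∈ SKKT φ₀ Φ θ (kktProbe φ₀ Φ xb vb μ (x₁, v₁)).1
      (kktProbe φ₀ Φ xb vb μ (x₁, v₁)).2)
    (hdist : ‖(xb, v₁) - (x', v')‖ ≤ c * (μ * ‖(x₁, v₁) - (xb, vb)‖)) {δ : ℝ}
    (hball : Metric.ball (xb, vb) δ ⊆ s) (hδ : (c * μ + 2) * ‖(x₁, v₁) - (xb, vb)‖ < δ) :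
    μ * ‖(x₁, v₁) - (xb, vb)‖ ^ 2
      ≤ μ * ‖(x₁, v₁) - (xb, vb)‖ ^ 2 * (4 * ε * c + 2 * c * μ * (K * c + 1)) := by
  set r := ‖(x₁, v₁) - (xb, vb)‖ with hr
  have hr₀ : 0 ≤ r := norm_nonneg _
  have hrmax : r = max ‖x₁ - xb‖ ‖v₁ - vb‖ := Prod.norm_def _
  have hsq : r ^ 2 ≤ ‖x₁ - xb‖ ^ 2 + ‖v₁ - vb‖ ^ 2 := by
    rcases max_choice ‖x₁ - xb‖ ‖v₁ - vb‖ with h | h <;> rw [hrmax, h] <;> nlinarith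
  have hd : ‖(x', v') - (xb, v₁)‖ ≤ c * (μ * r) := by rwa [norm_sub_rev]
  have hqc₀ : ‖(xb, v₁) - (xb, vb)‖ ≤ r := by simp [Prod.norm_def, hrmax]
  have hq'₀ : ‖(x', v') - (xb, vb)‖ ≤ c * (μ * r) + r :=
    (norm_sub_le_norm_sub_add_norm_sub _ _ _).trans (add_le_add hd hqc₀)
  have hs : ∀ q, ‖q - (xb, vb)‖ < δ → q ∈ s := fun q hq =>
    hball (by rwa [Metric.mem_ball, dist_eq_norm])
  have hcμr : 0 ≤ c * (μ * r) := by positivity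
  have hs₁ := hs (x₁, v₁) (by linarith)
  have hs₀ := hs (xb, vb) (by rw [sub_self, norm_zero]; linarith)
  have hsc := hs (xb, v₁) (by linarith)
  have hs' := hs (x', v') (by linarith)
  have hinner := inner_sub_le_of_lipschitzOnWith hK hs' hsc hd hμ
    (hrmax ▸ le_max_right _ _ : ‖v₁ - vb‖ ≤ r)
  have hasym := happrox.abs_pairing_sub_pairing_le hsymm hs₁ hs₀ hs' hsc
  rw [← hr] at hasym
  have hasym' : 4 * ε * (r * ‖(x', v') - (xb, v₁)‖) ≤ 4 * ε * (r * (c * (μ * r))) := by gcongr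
  have key := mul_norm_sq_add_le_of_mem_SKKT hvb hq₁ hv₁ hexact hq'
  calc μ * r ^ 2 ≤ μ * (‖x₁ - xb‖ ^ 2 + ‖v₁ - vb‖ ^ 2) := by gcongr
    _ ≤ 4 * ε * (r * (c * (μ * r))) + 2 * (c * (μ * r) * (K * (c * (μ * r)) + μ * r)) := by
      linarith [le_abs_self (pairing ((x₁, v₁) - (xb, vb))
        (kktMap φ₀ Φ (x', v') - kktMap φ₀ Φ (xb, v₁)) - pairing (kktMap φ₀ Φ (x₁, v₁)
        - kktMap φ₀ Φ (xb, vb)) ((x', v') - (xb, v₁)))]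
    _ = μ * r ^ 2 * (4 * ε * c + 2 * c * μ * (K * c + 1)) := by ring

lemma exists_pos_mul_add_mul_lt_one {c K : ℝ} (hc : 0 ≤ c) (hK : 0 ≤ K) :
    ∃ ε : ℝ≥0, 0 < ε ∧ ∃ μ : ℝ, 0 < μ ∧ 4 * ε * c + 2 * c * μ * (K * c + 1) < 1 := by
  set ε : ℝ≥0 := ⟨1 / (8 * (c + 1)), by positivity⟩
  have hε : (ε : ℝ) = 1 / (8 * (c + 1)) := rfl
  refine ⟨ε, by rw [← NNReal.coe_pos, hε]; positivity, 1 / (4 * (c + 1) * (K * c + 1)),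
    by positivity, ?_⟩
  rw [hε]
  field_simp
  nlinarith

theorem eventually_eq_of_mem_SKKT_zero (hphi : ContDiffAt ℝ 2 φ₀ xb)
    (hPhi : ContDiffAt ℝ 2 Φ xb) (hvb : vb ∈ LamCom φ₀ Φ θ xb)
    (hll : LipschitzLike (fun p => SKKT φ₀ Φ θ p.1 p.2) (xb, vb)) :
    ∀ᶠ q in 𝓝 (xb, vb), q ∈ SKKT φ₀ Φ θ 0 0 → q = (xb, vb) := by
  obtain ⟨c, hc, U, hU, V, hV, hAubin⟩ := hll
  have hG := hasStrictFDerivAt_kktMap (vb := vb) hphi hPhi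
  obtain ⟨K, t, ht, hK⟩ := hG.exists_lipschitzOnWith
  obtain ⟨ε, hεpos, μ, hμpos, hconst⟩ := exists_pos_mul_add_mul_lt_one hc K.2
  obtain ⟨s, hs, happrox⟩ := hG.approximates_deriv_on_nhds (Or.inr hεpos)
  obtain ⟨δ, hδ, hball⟩ := Metric.mem_nhds_iff.1 (inter_mem hs ht)
  have hcorner : Tendsto (fun q : Ev n × Ev m => ((xb, q.2) : Ev n × Ev m)) (𝓝 (xb, vb))
      (𝓝 (xb, vb)) :=
    (continuous_const.prodMk continuous_snd).tendsto (xb, vb)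
  have hprobe := tendsto_kktProbe hG.continuousAt hvb.1
  have hsmall : Tendsto (fun q : Ev n × Ev m => (c * μ + 2) * ‖q - (xb, vb)‖) (𝓝 (xb, vb))
      (𝓝 0) := by
    simpa using (tendsto_norm_sub_self (xb, vb)).const_mul (c * μ + 2)
  have hΦ : Tendsto (fun q : Ev n × Ev m => Φ q.1) (𝓝 (xb, vb)) (𝓝 (Φ xb)) :=
    hPhi.continuousAt.tendsto.comp (continuous_fst.tendsto _)
  filter_upwards [hΦ.eventually (θ.eventually_subdiff_subset hvb.2.1),
    (hprobe 0).eventually hU, (hprobe μ).eventually hU, hcorner.eventually hV,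
    hsmall.eventually (gt_mem_nhds hδ)]
    with ⟨x₁, v₁⟩ hloc hpcU hprU hqcV hr hq₁
  by_contra hne
  have hr₀ : 0 < ‖(x₁, v₁) - (xb, vb)‖ := norm_pos_iff.2 (sub_ne_zero.2 hne)
  obtain ⟨hv₁, hexact⟩ := hloc v₁ (by simpa using hq₁.2)
  have hqc : (xb, v₁) ∈ SKKT φ₀ Φ θ (kktProbe φ₀ Φ xb vb 0 (x₁, v₁)).1
      (kktProbe φ₀ Φ xb vb 0 (x₁, v₁)).2 :=
    ⟨by simp [kktProbe, kktMap], by simpa [kktProbe] using hv₁⟩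
  obtain ⟨⟨x', v'⟩, hq', hdist⟩ := hAubin _ hpcU _ hprU (xb, v₁) ⟨hqc, hqcV⟩
  rw [norm_kktProbe_zero_sub hμpos.le] at hdist
  have key := mul_norm_sq_le_mul_of_mem_SKKT hc hμpos.le (happrox.mono_set inter_subset_left)
    (pairing_kktJac_comm hphi hPhi) (hK.mono inter_subset_right) hvb hq₁ hv₁ hexact hq' hdist
    hball hr
  exact (mul_lt_of_lt_one_right (mul_pos hμpos (pow_pos hr₀ 2)) hconst).not_ge key

end Isolated

theorem RobustIsolCalm.of_lipschitzLike {n m : ℕ} {S : Ev n × Ev m → Set (Ev n × Ev m)}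
    {q₀ : Ev n × Ev m} (hq₀ : q₀ ∈ S 0) (hiso : ∀ᶠ q in 𝓝 q₀, q ∈ S 0 → q = q₀)
    (hS : LipschitzLike S q₀) : RobustIsolCalm S q₀ := by
  obtain ⟨c, hc, U, hU, V, hV, hAubin⟩ := hS
  obtain ⟨ρ, hρ, hball⟩ := Metric.mem_nhds_iff.1 (inter_mem hV hiso)
  have hsmall : ∀ᶠ p in 𝓝 (0 : Ev n × Ev m), c * ‖p‖ < ρ / 2 := by
    have : Tendsto (fun p : Ev n × Ev m => c * ‖p‖) (𝓝 0) (𝓝 0) := by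
      simpa using tendsto_norm_zero.const_mul c
    exact this.eventually (gt_mem_nhds (by positivity))
  have h0U : (0 : Ev n × Ev m) ∈ U := mem_of_mem_nhds hU
  have hhalf : Metric.ball q₀ (ρ / 2) ⊆ V := fun q hq =>
    (hball (Metric.ball_subset_ball (by linarith) hq)).1
  refine ⟨c, hc, U ∩ {p | c * ‖p‖ < ρ / 2}, inter_mem hU hsmall, Metric.ball q₀ (ρ / 2),
    Metric.ball_mem_nhds _ (by positivity), ?_, ?_⟩
  · rintro p ⟨hpU, hp : c * ‖p‖ < ρ / 2⟩ q ⟨hq, hqρ⟩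
    obtain ⟨q', hq', hqq'⟩ := hAubin p hpU 0 h0U q ⟨hq, hhalf hqρ⟩
    rw [sub_zero] at hqq'
    have hq'ρ : q' ∈ Metric.ball q₀ ρ := by
      rw [Metric.mem_ball, dist_eq_norm] at hqρ ⊢
      calc ‖q' - q₀‖ ≤ ‖q - q'‖ + ‖q - q₀‖ := by
            rw [norm_sub_rev q q']; exact norm_sub_le_norm_sub_add_norm_sub _ _ _
        _ < ρ := by linarith
    rw [← (hball hq'ρ).2 hq']
    have hp₁₂ : ‖p‖ ≤ ‖p.1‖ + ‖p.2‖ :=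
      (Prod.norm_def p).trans_le (max_le_add_of_nonneg (norm_nonneg _) (norm_nonneg _))
    exact hqq'.trans (mul_le_mul_of_nonneg_left hp₁₂ hc)
  · rintro p ⟨hpU, hp : c * ‖p‖ < ρ / 2⟩
    obtain ⟨q', hq', hq₀q'⟩ :=
      hAubin 0 h0U p hpU q₀ ⟨hq₀, hhalf (Metric.mem_ball_self (by positivity))⟩
    refine ⟨q', hq', ?_⟩
    rw [Metric.mem_ball, dist_eq_norm, norm_sub_rev]
    rw [zero_sub, norm_neg] at hq₀q'
    linarith

/-- the Lipschitz-like property of the KKT solution map implies its robust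
isolated calmness. -/
theorem stmt19 {n m : ℕ} (θ : CPWL m) (φ₀ : Ev n → ℝ) (Φ : Ev n → Ev m)
    (xb : Ev n) (vb : Ev m)
    (hphi : ContDiffAt ℝ 2 φ₀ xb) (hPhi : ContDiffAt ℝ 2 Φ xb)
    (hvb : vb ∈ LamCom φ₀ Φ θ xb)
    (hll : LipschitzLike (fun p => SKKT φ₀ Φ θ p.1 p.2) (xb, vb)) :
    RobustIsolCalm (fun p => SKKT φ₀ Φ θ p.1 p.2) (xb, vb) :=
  RobustIsolCalm.of_lipschitzLike ⟨hvb.1, by simpa using hvb.2⟩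
    (eventually_eq_of_mem_SKKT_zero hphi hPhi hvb hll) hll
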